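/- Fix a finite MDP, α > 0, and κ ∈ [0,1). Let T' : ℝ^{S×𝒜} → ℝ^{S×𝒜} be a sandwiched operator, let Ψ_0 : S×𝒜 → ℝ with ‖Ψ_0‖_∞ < ∞, and consider the induced sequence Ψ_{k+1} = T' Ψ_k with V_k = L^α Ψ_k. Then for all k ∈ ℕ and all (s,a) ∈ S×𝒜: Ψ_k(s,a) ≤ (R_max + ‖Ψ_0‖_∞ + γ·α·log|𝒜|)/(1−γ), and Ψ_k(s,a) ≥ −(1/((1−κ)(1−γ)))·((1+κ)·R_max + (γ+κ)·(3·‖V_0‖_∞ + α·log|𝒜|)) − ‖Ψ_0‖_∞. -/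

import Mathlib

open Finset Filter

noncomputable section

variable {S A : Type*}

/-- A Markovian transition kernel: nonnegative and summing to one over next states. -/
def isKernel [Fintype S] (P : S → A → S → ℝ) : Prop :=
  (∀ s a s', 0 ≤ P s a s') ∧ ∀ s a, ∑ s', P s a s' = 1

/-- A (Markovian, stochastic) policy: a probability distribution over actions per state. -/
def isPolicy [Fintype A] (π : S → A → ℝ) : Prop :=
  (∀ s a, 0 ≤ π s a) ∧ ∀ s, ∑ a, π s a = 1

/-- A bounding function with constant `c > 0`: nondecreasing, `h 0 = 0`,
`0 ≤ h x ≤ x` for `x ≥ 0`, `x ≤ h x ≤ 0` for `x ≤ 0`, and `|h x| ≤ c`. -/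
def isBounding (h : ℝ → ℝ) (c : ℝ) : Prop :=
  Monotone h ∧ h 0 = 0 ∧ (∀ x, 0 ≤ x → 0 ≤ h x ∧ h x ≤ x) ∧
    (∀ x, x ≤ 0 → x ≤ h x ∧ h x ≤ 0) ∧ (∀ x, |h x| ≤ c) ∧ 0 < c

/-- The soft (log-sum-exp) state value `(L^α Ψ)(s) = α log ∑_a exp (Ψ(s,a)/α)`. -/
def lse [Fintype A] (α : ℝ) (Ψ : S → A → ℝ) (s : S) : ℝ :=
  α * Real.log (∑ a, Real.exp (Ψ s a / α))

/-- The softmax (Boltzmann) policy `G^α(Ψ)`. -/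
def gibbs [Fintype A] (α : ℝ) (Ψ : S → A → ℝ) (s : S) (a : A) : ℝ :=
  Real.exp (Ψ s a / α) / ∑ b, Real.exp (Ψ s b / α)

/-- The soft advantage `A_Ψ(s,a) = Ψ(s,a) − (L^α Ψ)(s)`. -/
def adv [Fintype A] (α : ℝ) (Ψ : S → A → ℝ) (s : S) (a : A) : ℝ :=
  Ψ s a - lse α Ψ s

/-- `(P V)(s,a) = ∑_{s'} P(s'|s,a) V(s')`. -/
def PV [Fintype S] (P : S → A → S → ℝ) (V : S → ℝ) (s : S) (a : A) : ℝ :=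
  ∑ s', P s a s' * V s'

/-- `(P^π W)(s) = ∑_a π(a|s) ∑_{s'} P(s'|s,a) W(s')`. -/
def Ppi [Fintype S] [Fintype A] (P : S → A → S → ℝ) (π : S → A → ℝ)
    (W : S → ℝ) (s : S) : ℝ :=
  ∑ a, π s a * ∑ s', P s a s' * W s'

/-- Entropy of a policy: `H(π)(s) = −∑_a π(a|s) log π(a|s)`. -/
def ent [Fintype A] (π : S → A → ℝ) (s : S) : ℝ :=
  -∑ a, π s a * Real.log (π s a)

/-- KL divergence between two policies at a state. -/
def klDiv [Fintype A] (π₁ π₂ : S → A → ℝ) (s : S) : ℝ :=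
  ∑ a, π₁ s a * Real.log (π₁ s a / π₂ s a)

/-- The soft Bellman optimality operator
`(T^α Ψ)(s,a) = R(s,a) + γ ∑_{s'} P(s'|s,a) (L^α Ψ)(s')`. -/
def softBellman [Fintype S] [Fintype A] (P : S → A → S → ℝ) (R : S → A → ℝ)
    (γ α : ℝ) (Ψ : S → A → ℝ) (s : S) (a : A) : ℝ :=
  R s a + γ * ∑ s', P s a s' * lse α Ψ s'

/-- A sandwiched operator:
`(T^α Ψ)(s,a) − κ((L^α Ψ)(s) − Ψ(s,a)) ≤ (T' Ψ)(s,a) ≤ (T^α Ψ)(s,a)` for all `Ψ, s, a`. -/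
def Sandwiched [Fintype S] [Fintype A] (P : S → A → S → ℝ) (R : S → A → ℝ)
    (γ α κ : ℝ) (T' : (S → A → ℝ) → S → A → ℝ) : Prop :=
  ∀ Ψ s a, softBellman P R γ α Ψ s a - κ * (lse α Ψ s - Ψ s a) ≤ T' Ψ s a ∧
    T' Ψ s a ≤ softBellman P R γ α Ψ s a

/-- The bounded gap-increasing operator `T^{fg}_π`. -/
def balOp [Fintype S] [Fintype A] (P : S → A → S → ℝ) (R : S → A → ℝ)
    (γ α κ : ℝ) (f g : ℝ → ℝ) (π Ψ : S → A → ℝ) (s : S) (a : A) : ℝ :=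
  R s a + κ * f (adv α Ψ s a) +
    γ * ∑ s', P s a s' * ∑ a', π s' a' * (Ψ s' a' - g (adv α Ψ s' a'))

/-- The BAL sequence `Ψ_{k+1} = T^{fg}_{π_{k+1}} Ψ_k` with `π_{k+1} = G^α(Ψ_k)`. -/
def balSeq [Fintype S] [Fintype A] (P : S → A → S → ℝ) (R : S → A → ℝ)
    (γ α κ : ℝ) (f g : ℝ → ℝ) (Ψ0 : S → A → ℝ) : ℕ → S → A → ℝ
  | 0 => Ψ0
  | k + 1 => balOp P R γ α κ f g (gibbs α (balSeq P R γ α κ f g Ψ0 k))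
      (balSeq P R γ α κ f g Ψ0 k)

/-- The BAL policy sequence: `π_0` is uniform and `π_{k+1} = G^α(Ψ_k)`. -/
def balPol [Fintype S] [Fintype A] (P : S → A → S → ℝ) (R : S → A → ℝ)
    (γ α κ : ℝ) (f g : ℝ → ℝ) (Ψ0 : S → A → ℝ) : ℕ → S → A → ℝ
  | 0 => fun _ _ => 1 / (Fintype.card A : ℝ)
  | k + 1 => gibbs α (balSeq P R γ α κ f g Ψ0 k)

/-- Hard (non-regularized) state value `V(s) = max_a Ψ(s,a)`. -/
def hardV [Fintype A] [Nonempty A] (Ψ : S → A → ℝ) (s : S) : ℝ :=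
  Finset.univ.sup' Finset.univ_nonempty (Ψ s)

/-- Hard advantage `A(s,a) = Ψ(s,a) − V(s)`. -/
def hardAdv [Fintype A] [Nonempty A] (Ψ : S → A → ℝ) (s : S) (a : A) : ℝ :=
  Ψ s a - hardV Ψ s

/-- Hard Bellman optimality operator `(T Ψ)(s,a) = R(s,a) + γ ∑_{s'} P(s'|s,a) max_b Ψ(s',b)`. -/
def hardBellman [Fintype S] [Fintype A] [Nonempty A] (P : S → A → S → ℝ)
    (R : S → A → ℝ) (γ : ℝ) (Ψ : S → A → ℝ) (s : S) (a : A) : ℝ :=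
  R s a + γ * ∑ s', P s a s' * hardV Ψ s'

/-- Hard bounded gap-increasing operator. -/
def hardBalOp [Fintype S] [Fintype A] [Nonempty A] (P : S → A → S → ℝ)
    (R : S → A → ℝ) (γ κ : ℝ) (f g : ℝ → ℝ) (π Ψ : S → A → ℝ) (s : S) (a : A) : ℝ :=
  R s a + κ * f (hardAdv Ψ s a) +
    γ * ∑ s', P s a s' * ∑ a', π s' a' * (Ψ s' a' - g (hardAdv Ψ s' a'))


/-! The soft values `V_k = L^α Ψ_k` stay in `[-W, W]` with
`W = ‖V_0‖_∞ + (R_max + α log |𝒜|) / (1 - γ)`: from above since `T' ≤ T^α` and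
`L^α Ψ ≤ max Ψ + α log |𝒜|`, from below by evaluating `T' Ψ_k` at an action greedy for `Ψ_k`,
where the sandwich gap `κ (V_k - Ψ_k)` is at most `κ α log |𝒜|`. Given this, the lower sandwich
reads `Ψ_{k+1} ≥ κ Ψ_k - (R_max + (γ + κ) W)`, a recursion with fixed point
`-(R_max + (γ + κ) W) / (1 - κ)`, which gives the lower bound. The upper bound is the invariance
of `{Ψ ≤ U}` under `T^α` for `(1 - γ) U = R_max + ‖Ψ_0‖_∞ + γ α log |𝒜|`. -/

open Set

lemma neg_div_sub_le_of_mul_sub_le_succ {x : ℕ → ℝ} {κ D M : ℝ} (hκ0 : 0 ≤ κ) (hκ1 : κ < 1)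
    (hD : 0 ≤ D) (hM : 0 ≤ M) (h0 : -M ≤ x 0) (hstep : ∀ k, κ * x k - D ≤ x (k + 1)) (k : ℕ) :
    -(D / (1 - κ)) - M ≤ x k := by
  induction k with
  | zero => linarith [div_nonneg hD (sub_pos.2 hκ1).le]
  | succ k ih =>
    have hfix : κ * (D / (1 - κ)) + D = D / (1 - κ) := by
      field_simp [(sub_pos.2 hκ1).ne']
      ring
    nlinarith [mul_le_mul_of_nonneg_left ih hκ0, hstep k]

section SoftValue

variable [Fintype A] {α : ℝ}

lemma le_lse (hα : 0 < α) (Ψ : S → A → ℝ) (s : S) (a : A) : Ψ s a ≤ lse α Ψ s := by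
  have hsum : Real.exp (Ψ s a / α) ≤ ∑ b, Real.exp (Ψ s b / α) :=
    single_le_sum (f := fun b => Real.exp (Ψ s b / α)) (fun b _ => (Real.exp_pos _).le) (mem_univ a)
  have hlog := Real.log_le_log (Real.exp_pos _) hsum
  rw [Real.log_exp, div_le_iff₀ hα] at hlog
  unfold lse
  linarith

variable [Nonempty A]

lemma lse_le_hardV_add (hα : 0 < α) (Ψ : S → A → ℝ) (s : S) :
    lse α Ψ s ≤ hardV Ψ s + α * Real.log (Fintype.card A) := by
  have hcard : (0 : ℝ) < Fintype.card A := by exact_mod_cast Fintype.card_pos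
  have hsum : ∑ b, Real.exp (Ψ s b / α) ≤ Fintype.card A * Real.exp (hardV Ψ s / α) := by
    calc ∑ b, Real.exp (Ψ s b / α) ≤ ∑ _b : A, Real.exp (hardV Ψ s / α) :=
          sum_le_sum fun b _ => Real.exp_le_exp.2 <|
            div_le_div_of_nonneg_right (le_sup' (Ψ s) (mem_univ b)) hα.le
      _ = Fintype.card A * Real.exp (hardV Ψ s / α) := by simp
  have hlog := Real.log_le_log (sum_pos (fun b _ => Real.exp_pos _) univ_nonempty) hsum
  rw [Real.log_mul hcard.ne' (Real.exp_pos _).ne', Real.log_exp] at hlog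
  have := mul_le_mul_of_nonneg_left hlog hα.le
  rw [mul_add, mul_div_cancel₀ _ hα.ne'] at this
  unfold lse
  linarith

lemma exists_lse_sub_le (hα : 0 < α) (Ψ : S → A → ℝ) (s : S) :
    ∃ a, lse α Ψ s - Ψ s a ≤ α * Real.log (Fintype.card A) := by
  obtain ⟨a, -, ha⟩ := exists_mem_eq_sup' univ_nonempty (Ψ s)
  refine ⟨a, ?_⟩
  have := lse_le_hardV_add hα Ψ s
  rw [hardV, ha] at this
  linarith

end SoftValue

namespace isKernel

variable [Fintype S] {P : S → A → S → ℝ} {V : S → ℝ} {c : ℝ}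

lemma sum_mul_le (hP : isKernel P) (hV : ∀ s', V s' ≤ c) (s : S) (a : A) :
    ∑ s', P s a s' * V s' ≤ c :=
  calc ∑ s', P s a s' * V s' ≤ ∑ s', P s a s' * c :=
        sum_le_sum fun s' _ => mul_le_mul_of_nonneg_left (hV s') (hP.1 s a s')
    _ = c := by rw [← sum_mul, hP.2 s a, one_mul]

lemma abs_sum_mul_le (hP : isKernel P) (hV : ∀ s', |V s'| ≤ c) (s : S) (a : A) :
    |∑ s', P s a s' * V s'| ≤ c := by
  have hneg := hP.sum_mul_le (V := fun s' => -V s') (fun s' => (neg_le_abs _).trans (hV s')) s a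
  simp only [mul_neg, sum_neg_distrib] at hneg
  exact abs_le.2 ⟨by linarith, hP.sum_mul_le (fun s' => le_of_abs_le (hV s')) s a⟩

end isKernel

section SoftBellman

variable [Fintype S] [Fintype A] {P : S → A → S → ℝ} {R : S → A → ℝ} {Rmax γ α c : ℝ}
  {Ψ : S → A → ℝ}

lemma softBellman_le (hP : isKernel P) (hR : ∀ s a, |R s a| ≤ Rmax) (hγ : 0 ≤ γ)
    (hΨ : ∀ s', lse α Ψ s' ≤ c) (s : S) (a : A) : softBellman P R γ α Ψ s a ≤ Rmax + γ * c :=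
  add_le_add (le_of_abs_le (hR s a)) (mul_le_mul_of_nonneg_left (hP.sum_mul_le hΨ s a) hγ)

lemma abs_softBellman_le (hP : isKernel P) (hR : ∀ s a, |R s a| ≤ Rmax) (hγ : 0 ≤ γ)
    (hΨ : ∀ s', |lse α Ψ s'| ≤ c) (s : S) (a : A) :
    |softBellman P R γ α Ψ s a| ≤ Rmax + γ * c := by
  refine (abs_add_le _ _).trans (add_le_add (hR s a) ?_)
  rw [abs_mul, abs_of_nonneg hγ]
  exact mul_le_mul_of_nonneg_left (hP.abs_sum_mul_le hΨ s a) hγ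

end SoftBellman

namespace Sandwiched

variable [Fintype S] [Fintype A] {P : S → A → S → ℝ} {R : S → A → ℝ}
  {Rmax γ α κ : ℝ} {T' : (S → A → ℝ) → S → A → ℝ}

theorem mul_sub_le (hT : Sandwiched P R γ α κ T') (hP : isKernel P)
    (hR : ∀ s a, |R s a| ≤ Rmax) (hγ : 0 ≤ γ) (hκ0 : 0 ≤ κ) {W : ℝ} {Ψ : S → A → ℝ}
    (hΨ : ∀ s, |lse α Ψ s| ≤ W) (s : S) (a : A) :
    κ * Ψ s a - (Rmax + (γ + κ) * W) ≤ T' Ψ s a := by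
  have hbell := neg_le_of_abs_le (abs_softBellman_le hP hR hγ hΨ s a)
  have hlse := mul_le_mul_of_nonneg_left (le_of_abs_le (hΨ s)) hκ0
  linarith [(hT Ψ s a).1]

variable [Nonempty A]

theorem mapsTo_le (hT : Sandwiched P R γ α κ T') (hP : isKernel P)
    (hR : ∀ s a, |R s a| ≤ Rmax) (hγ : 0 ≤ γ) (hα : 0 < α) {U : ℝ}
    (hU : Rmax + γ * (U + α * Real.log (Fintype.card A)) ≤ U) :
    MapsTo T' {Ψ | ∀ s a, Ψ s a ≤ U} {Ψ | ∀ s a, Ψ s a ≤ U} := fun Ψ hΨ s a =>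
  have hlse s' := (lse_le_hardV_add hα Ψ s').trans <|
    add_le_add_left (sup'_le _ _ fun a _ => hΨ s' a) _
  (hT Ψ s a).2.trans <| (softBellman_le hP hR hγ hlse s a).trans hU

theorem mapsTo_abs_lse_le (hT : Sandwiched P R γ α κ T') (hP : isKernel P)
    (hR : ∀ s a, |R s a| ≤ Rmax) (hγ : 0 ≤ γ) (hα : 0 < α) (hκ0 : 0 ≤ κ) (hκ1 : κ ≤ 1)
    {W : ℝ} (hW : Rmax + γ * W + α * Real.log (Fintype.card A) ≤ W) :
    MapsTo T' {Ψ | ∀ s, |lse α Ψ s| ≤ W} {Ψ | ∀ s, |lse α Ψ s| ≤ W} := by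
  intro Ψ hΨ s
  have hL := mul_nonneg hα.le (Real.log_natCast_nonneg (Fintype.card A))
  have hupper : lse α (T' Ψ) s ≤ W := by
    have hmax : hardV (T' Ψ) s ≤ Rmax + γ * W := sup'_le _ _ fun a _ =>
      (hT Ψ s a).2.trans (softBellman_le hP hR hγ (fun s' => le_of_abs_le (hΨ s')) s a)
    linarith [lse_le_hardV_add hα (T' Ψ) s]
  have hlower : -W ≤ lse α (T' Ψ) s := by
    obtain ⟨a, ha⟩ := exists_lse_sub_le hα Ψ s
    have hgap := mul_le_mul_of_nonneg_left ha hκ0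
    have hbell := neg_le_of_abs_le (abs_softBellman_le hP hR hγ hΨ s a)
    linarith [(hT Ψ s a).1, le_lse hα (T' Ψ) s a, mul_le_of_le_one_left hL hκ1]
  exact abs_le.2 ⟨hlower, hupper⟩

theorem iterate_le (hT : Sandwiched P R γ α κ T') (hP : isKernel P)
    (hR : ∀ s a, |R s a| ≤ Rmax) (hRmax : 0 ≤ Rmax) (hγ0 : 0 ≤ γ) (hγ1 : γ < 1) (hα : 0 < α)
    {Ψ0 : S → A → ℝ} {M : ℝ} (hM : 0 ≤ M) (hΨ0 : ∀ s a, Ψ0 s a ≤ M) (k : ℕ) (s : S) (a : A) :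
    T'^[k] Ψ0 s a ≤ (Rmax + M + γ * α * Real.log (Fintype.card A)) / (1 - γ) := by
  set U := (Rmax + M + γ * α * Real.log (Fintype.card A)) / (1 - γ) with hU
  have hUγ : (1 - γ) * U = Rmax + M + γ * α * Real.log (Fintype.card A) := by
    rw [hU]; field_simp [(sub_pos.2 hγ1).ne']
  have hL := mul_nonneg hα.le (Real.log_natCast_nonneg (Fintype.card A))
  have hMU : M ≤ U := by nlinarith
  exact (hT.mapsTo_le hP hR hγ0 hα (by nlinarith)).iterate k (fun s a => (hΨ0 s a).trans hMU) s a

theorem abs_lse_iterate_le [Nonempty S] (hT : Sandwiched P R γ α κ T') (hP : isKernel P)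
    (hR : ∀ s a, |R s a| ≤ Rmax) (hRmax : 0 ≤ Rmax) (hγ0 : 0 ≤ γ) (hγ1 : γ < 1) (hα : 0 < α)
    (hκ0 : 0 ≤ κ) (hκ1 : κ ≤ 1) {Ψ0 : S → A → ℝ} {V0 : ℝ} (hV0 : ∀ s, |lse α Ψ0 s| ≤ V0)
    (k : ℕ) (s : S) :
    |lse α (T'^[k] Ψ0) s| ≤ V0 + (Rmax + α * Real.log (Fintype.card A)) / (1 - γ) := by
  set W := V0 + (Rmax + α * Real.log (Fintype.card A)) / (1 - γ) with hW
  have h1γ : 0 < 1 - γ := sub_pos.2 hγ1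
  have hWγ : (1 - γ) * W = (1 - γ) * V0 + (Rmax + α * Real.log (Fintype.card A)) := by
    rw [hW]; field_simp
  have hL := mul_nonneg hα.le (Real.log_natCast_nonneg (Fintype.card A))
  have hV0nn : 0 ≤ V0 := (abs_nonneg _).trans (hV0 (Classical.arbitrary S))
  exact (hT.mapsTo_abs_lse_le hP hR hγ0 hα hκ0 hκ1 (by nlinarith)).iterate k
    (fun s => (hV0 s).trans (le_add_of_nonneg_right (div_nonneg (by linarith) h1γ.le))) s

theorem le_iterate [Nonempty S] (hT : Sandwiched P R γ α κ T') (hP : isKernel P)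
    (hR : ∀ s a, |R s a| ≤ Rmax) (hRmax : 0 ≤ Rmax) (hγ0 : 0 ≤ γ) (hγ1 : γ < 1) (hα : 0 < α)
    (hκ0 : 0 ≤ κ) (hκ1 : κ < 1) {Ψ0 : S → A → ℝ} {M V0 : ℝ} (hM : 0 ≤ M)
    (hΨ0 : ∀ s a, -M ≤ Ψ0 s a) (hV0 : ∀ s, |lse α Ψ0 s| ≤ V0) (k : ℕ) (s : S) (a : A) :
    -((Rmax + (γ + κ) * (V0 + (Rmax + α * Real.log (Fintype.card A)) / (1 - γ))) / (1 - κ))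
      - M ≤ T'^[k] Ψ0 s a := by
  have hvalue := hT.abs_lse_iterate_le hP hR hRmax hγ0 hγ1 hα hκ0 hκ1.le hV0
  have hWnn := (abs_nonneg _).trans (hvalue 0 s)
  refine neg_div_sub_le_of_mul_sub_le_succ hκ0 hκ1 (by positivity) hM
    (x := fun k => T'^[k] Ψ0 s a) (hΨ0 s a) (fun k => ?_) k
  simp only [Function.iterate_succ_apply']
  exact hT.mul_sub_le hP hR hγ0 hκ0 (hvalue k) s a

end Sandwiched

/-- upper and lower bounds on `Ψ_k` for the sequence induced by a
sandwiched operator. -/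
theorem sandwiched_psi_bounded [Fintype S] [Fintype A] [Nonempty S] [Nonempty A]
    (P : S → A → S → ℝ) (R : S → A → ℝ) (Rmax γ α κ : ℝ)
    (hP : isKernel P) (hR : ∀ s a, |R s a| ≤ Rmax) (hRmax : 0 ≤ Rmax)
    (hγ0 : 0 < γ) (hγ1 : γ < 1) (hα : 0 < α) (hκ0 : 0 ≤ κ) (hκ1 : κ < 1)
    (T' : (S → A → ℝ) → S → A → ℝ) (hT : Sandwiched P R γ α κ T')
    (Ψ0 : S → A → ℝ) :
    ∀ (k : ℕ) (s : S) (a : A),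
      T'^[k] Ψ0 s a ≤
          (Rmax + (Finset.univ.sup' Finset.univ_nonempty fun p : S × A => |Ψ0 p.1 p.2|) +
              γ * α * Real.log (Fintype.card A : ℝ)) / (1 - γ) ∧
        -(1 / ((1 - κ) * (1 - γ)) *
              ((1 + κ) * Rmax +
                (γ + κ) *
                  (3 * (Finset.univ.sup' Finset.univ_nonempty fun s' => |lse α Ψ0 s'|) +
                    α * Real.log (Fintype.card A : ℝ)))) -
            (Finset.univ.sup' Finset.univ_nonempty fun p : S × A => |Ψ0 p.1 p.2|) ≤
          T'^[k] Ψ0 s a := by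
  set M := univ.sup' univ_nonempty fun p : S × A => |Ψ0 p.1 p.2|
  set V0 := univ.sup' univ_nonempty fun s' => |lse α Ψ0 s'|
  set L := α * Real.log (Fintype.card A : ℝ)
  have hΨ0 (s : S) (a : A) : |Ψ0 s a| ≤ M :=
    le_sup' (fun p : S × A => |Ψ0 p.1 p.2|) (mem_univ (s, a))
  have hV0 (s : S) : |lse α Ψ0 s| ≤ V0 := le_sup' (fun s' => |lse α Ψ0 s'|) (mem_univ s)
  have hM : 0 ≤ M := (abs_nonneg _).trans (hΨ0 (Classical.arbitrary S) (Classical.arbitrary A))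
  have hV0nn : 0 ≤ V0 := (abs_nonneg _).trans (hV0 (Classical.arbitrary S))
  -- the only slack: `(1 - γ) * V0 ≤ 3 * V0`
  have hconst : (Rmax + (γ + κ) * (V0 + (Rmax + L) / (1 - γ))) / (1 - κ) ≤
      1 / ((1 - κ) * (1 - γ)) * ((1 + κ) * Rmax + (γ + κ) * (3 * V0 + L)) := by
    have h1γ : 0 < 1 - γ := sub_pos.2 hγ1
    rw [one_div_mul_eq_div, mul_comm (1 - κ), ← div_div]
    refine div_le_div_of_nonneg_right ((le_div_iff₀ h1γ).2 ?_) (sub_pos.2 hκ1).le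
    rw [add_mul, mul_assoc, add_mul _ _ (1 - γ), div_mul_cancel₀ _ h1γ.ne']
    nlinarith [mul_nonneg (add_nonneg hγ0.le hκ0) hV0nn]
  intro k s a
  refine ⟨hT.iterate_le hP hR hRmax hγ0.le hγ1 hα hM (fun s a => le_of_abs_le (hΨ0 s a)) k s a,
    le_trans ?_ (hT.le_iterate hP hR hRmax hγ0.le hγ1 hα hκ0 hκ1 hM
      (fun s a => neg_le_of_abs_le (hΨ0 s a)) hV0 k s a)⟩
  linarith

end
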